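/- arXiv:2004.13549 — 6 statements merged into one kernel-verified Lean document; each statement's English description precedes it below -/
import Mathlib

section
/- Let H be an n×n Hermitian matrix, u a unit vector, λ̃ = ⟨u, H u⟩, and suppose the interval (α, β) contains λ̃ and exactly one eigenvalue λ of H. Then λ̃ − ‖r‖²/(β − λ̃) ≤ λ ≤ λ̃ + ‖r‖²/(λ̃ − α), where r = H u − λ̃ u (two-sided Kato–Temple bound). -/
/-- The matrix-vector product, viewed as an operation on Euclidean space. -/
noncomputable def matVec {n : ℕ} (H : Matrix (Fin n) (Fin n) ℂ)
    (u : EuclideanSpace ℂ (Fin n)) : EuclideanSpace ℂ (Fin n) :=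
  WithLp.toLp 2 (H.mulVec u)

set_option maxHeartbeats 1000000 in
/-- **Two-sided Kato–Temple bound.** Let `H` be Hermitian, `u` a unit vector with
Rayleigh quotient `λ̃ = ⟨u, H u⟩` and residual `r = H u − λ̃ u`. If the interval `(α, β)`
contains `λ̃` and exactly one point `lam` of the spectrum of `H`, then
`λ̃ − ‖r‖²/(β − λ̃) ≤ lam ≤ λ̃ + ‖r‖²/(λ̃ − α)`. -/
theorem kato_temple_two_sided (n : ℕ) (H : Matrix (Fin n) (Fin n) ℂ) (hH : H.IsHermitian)
    (u : EuclideanSpace ℂ (Fin n)) (hu : ‖u‖ = 1)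
    (lamt : ℝ) (hlamt : (lamt : ℂ) = (inner ℂ u (matVec H u) : ℂ))
    (r : EuclideanSpace ℂ (Fin n)) (hr : r = matVec H u - (lamt : ℂ) • u)
    (α β : ℝ) (hα : α < lamt) (hβ : lamt < β)
    (lam : ℝ) (hlam : (lam : ℂ) ∈ spectrum ℂ H) (hlamα : α < lam) (hlamβ : lam < β)
    (huniq : ∀ μ : ℂ, μ ∈ spectrum ℂ H → α < μ.re → μ.re < β → μ = (lam : ℂ)) :
    lamt - ‖r‖ ^ 2 / (β - lamt) ≤ lam ∧ lam ≤ lamt + ‖r‖ ^ 2 / (lamt - α) := by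
  classical
  have hS := Matrix.isHermitian_iff_isSymmetric.mp hH
  set b := hH.eigenvectorBasis with hb
  set μ := hH.eigenvalues with hmu
  set v : EuclideanSpace ℂ (Fin n) := b.repr u with hv
  have h0 : ∀ x, matVec H x = Matrix.toEuclideanLin H x := fun _ => rfl
  have hbe : ∀ j, matVec H (b j) = (μ j : ℂ) • b j := by
    intro j
    have := hH.mulVec_eigenvectorBasis j
    apply PiLp.ext
    intro i
    have h2 := congrFun this i
    simpa [matVec, Pi.smul_apply, Complex.real_smul] using h2
  have hrepr : ∀ i, b.repr (matVec H u) i = (μ i : ℂ) * v i := by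
    intro i
    rw [hv, OrthonormalBasis.repr_apply_apply, OrthonormalBasis.repr_apply_apply,
      h0 u, ← hS (b i) u, ← h0, hbe i]
    rw [inner_smul_left]
    simp
  set p : Fin n → ℝ := fun i => ‖v i‖ ^ 2 with hp
  have hpnn : ∀ i, 0 ≤ p i := fun i => sq_nonneg _
  -- norm squared of a Euclidean vector
  have hns : ∀ x : EuclideanSpace ℂ (Fin n), ‖x‖ ^ 2 = ∑ i, ‖x i‖ ^ 2 := by
    intro x
    rw [EuclideanSpace.norm_eq, Real.sq_sqrt]
    exact Finset.sum_nonneg fun i _ => sq_nonneg _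
  -- Fact A : ∑ p = 1
  have hA : ∑ i, p i = 1 := by
    have h1 : ‖v‖ = ‖u‖ := b.repr.norm_map u
    have := hns v
    rw [h1, hu] at this
    simpa [hp] using this.symm
  -- Fact B : lamt = ∑ μ i * p i
  have hB : lamt = ∑ i, μ i * p i := by
    have h1 : (inner ℂ u (matVec H u) : ℂ) = inner ℂ v (b.repr (matVec H u)) :=
      (b.repr.inner_map_map u (matVec H u)).symm
    have h2 : (lamt : ℂ) = ∑ i, ((μ i * p i : ℝ) : ℂ) := by
      rw [hlamt, h1, PiLp.inner_apply]
      refine Finset.sum_congr rfl fun i _ => ?_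
      rw [hrepr i, RCLike.inner_apply]
      have : (μ i : ℂ) * v i * (starRingEnd ℂ) (v i)
          = (μ i : ℂ) * ((starRingEnd ℂ) (v i) * v i) := by ring
      rw [this, ← Complex.normSq_eq_conj_mul_self, Complex.normSq_eq_norm_sq]
      simp only [hp]
      norm_cast
    rw [← Complex.ofReal_sum] at h2
    exact_mod_cast h2
  -- Fact C : ‖r‖² = ∑ (μ i − lamt)² p i
  have hC : ‖r‖ ^ 2 = ∑ i, (μ i - lamt) ^ 2 * p i := by
    have hrrepr : ∀ i, b.repr r i = ((μ i : ℂ) - lamt) * v i := by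
      intro i
      rw [hr, map_sub, map_smul]
      have : (b.repr (matVec H u) - (lamt : ℂ) • b.repr u) i
          = b.repr (matVec H u) i - (lamt : ℂ) * v i := rfl
      rw [this, hrepr i]
      ring
    have h1 : ‖r‖ = ‖b.repr r‖ := (b.repr.norm_map r).symm
    rw [h1, hns]
    refine Finset.sum_congr rfl fun i _ => ?_
    rw [hrrepr i, norm_mul]
    have h2 : ‖(μ i : ℂ) - (lamt : ℂ)‖ = |μ i - lamt| := by
      rw [← Complex.ofReal_sub, Complex.norm_real, Real.norm_eq_abs]
    rw [h2, mul_pow, sq_abs, hp]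
  -- eigenvalues lie outside (α, β) except lam
  have hout : ∀ i, μ i ≤ α ∨ μ i = lam ∨ β ≤ μ i := by
    intro i
    have hspec : ((μ i : ℝ) : ℂ) ∈ spectrum ℂ H := by
      have := hH.eigenvalues_mem_spectrum_real i
      simpa using spectrum.algebraMap_mem ℂ this
    by_cases h1 : μ i ≤ α
    · exact Or.inl h1
    · by_cases h2 : β ≤ μ i
      · exact Or.inr (Or.inr h2)
      · push_neg at h1 h2
        have := huniq ((μ i : ℝ) : ℂ) hspec (by simpa using h1) (by simpa using h2)
        exact Or.inr (Or.inl (by exact_mod_cast this))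
  -- key nonnegativity
  have key1 : 0 ≤ ∑ i, (μ i - lam) * (μ i - β) * p i := by
    refine Finset.sum_nonneg fun i _ => ?_
    refine mul_nonneg ?_ (hpnn i)
    rcases hout i with h | h | h
    · nlinarith
    · nlinarith
    · nlinarith
  have key2 : 0 ≤ ∑ i, (μ i - α) * (μ i - lam) * p i := by
    refine Finset.sum_nonneg fun i _ => ?_
    refine mul_nonneg ?_ (hpnn i)
    rcases hout i with h | h | h
    · nlinarith
    · nlinarith
    · nlinarith
  -- expand the sums
  have expand : ∀ a c : ℝ, ∑ i, (μ i - a) * (μ i - c) * p i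
      = ‖r‖ ^ 2 + (lamt - a) * (lamt - c) := by
    intro a c
    have h1 : ∀ i ∈ Finset.univ, (μ i - a) * (μ i - c) * p i
        = (μ i - lamt) ^ 2 * p i + (2 * lamt - a - c) * (μ i * p i)
          + (a * c - lamt ^ 2) * p i := fun i _ => by ring
    rw [Finset.sum_congr rfl h1, Finset.sum_add_distrib, Finset.sum_add_distrib,
      ← Finset.mul_sum, ← Finset.mul_sum, ← hC, ← hB, hA]
    ring
  rw [expand lam β] at key1
  rw [expand α lam] at key2
  have hβ' : (0 : ℝ) < β - lamt := by linarith
  have hα' : (0 : ℝ) < lamt - α := by linarith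
  constructor
  · have h1 : (lamt - lam) * (β - lamt) ≤ ‖r‖ ^ 2 := by nlinarith
    have h2 : lamt - lam ≤ ‖r‖ ^ 2 / (β - lamt) := by
      rw [le_div_iff₀ hβ']
      exact h1
    linarith
  · have h1 : (lam - lamt) * (lamt - α) ≤ ‖r‖ ^ 2 := by nlinarith
    have h2 : lam - lamt ≤ ‖r‖ ^ 2 / (lamt - α) := by
      rw [le_div_iff₀ hα']
      exact h1
    linarith
end

section
/- Let H be an n×n Hermitian matrix written in block form with respect to an orthogonal decomposition ℂⁿ = X ⊕ X⊥ as H = [[A, B], [B*, C]], and let μ ∈ ℝ not be an eigenvalue of A. Then the number of eigenvalues of H strictly less than μ equals the number of negative eigenvalues of A − μI plus the number of negative eigenvalues of the Schur complement S_μ = (C − μI) − B*(A − μI)⁻¹B (Haynsworth inertia additivity). -/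
/-!
Let `negIndex M` be the largest dimension of a subspace on which `x ↦ re (xᴴ M x)` is negative
definite. It is invariant under congruence `M ↦ Pᴴ M P` with `P` invertible (Sylvester's law of
inertia), so by the spectral theorem it counts the negative eigenvalues of a Hermitian matrix, and
it is additive on block-diagonal Hermitian matrices. The block factorisation
`H - μ = Rᴴ (diag (A - μ, S_μ)) R` with `R = [[1, (A - μ)⁻¹ B], [0, 1]]` then gives the formula.
-/

open Matrix Module Finset

namespace Matrix

variable {n : Type*} [Fintype n]

def IsNegDefOn (M : Matrix n n ℂ) (W : Submodule ℂ (n → ℂ)) : Prop :=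
  ∀ x ∈ W, x ≠ 0 → (star x ⬝ᵥ M *ᵥ x).re < 0

noncomputable def negIndex (M : Matrix n n ℂ) : ℕ :=
  sSup {d | ∃ W : Submodule ℂ (n → ℂ), M.IsNegDefOn W ∧ finrank ℂ W = d}

variable {M : Matrix n n ℂ}

lemma bddAbove_finrank_isNegDefOn :
    BddAbove {d | ∃ W : Submodule ℂ (n → ℂ), M.IsNegDefOn W ∧ finrank ℂ W = d} :=
  ⟨Fintype.card n, by
    rintro _ ⟨W, -, rfl⟩
    simpa using Submodule.finrank_le W⟩

lemma IsNegDefOn.finrank_le_negIndex {W : Submodule ℂ (n → ℂ)} (hW : M.IsNegDefOn W) :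
    finrank ℂ W ≤ M.negIndex :=
  le_csSup bddAbove_finrank_isNegDefOn ⟨W, hW, rfl⟩

lemma exists_isNegDefOn_finrank_eq_negIndex :
    ∃ W : Submodule ℂ (n → ℂ), M.IsNegDefOn W ∧ finrank ℂ W = M.negIndex :=
  Nat.sSup_mem (s := {d | ∃ W : Submodule ℂ (n → ℂ), M.IsNegDefOn W ∧ finrank ℂ W = d})
    ⟨0, ⊥, fun _ hx hx0 => (hx0 ((Submodule.mem_bot ℂ).mp hx)).elim, finrank_bot ℂ _⟩
    bddAbove_finrank_isNegDefOn

lemma star_dotProduct_conjTranspose_mul_mul_mulVec (M P : Matrix n n ℂ) (x : n → ℂ) :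
    star x ⬝ᵥ (Pᴴ * M * P) *ᵥ x = star (P *ᵥ x) ⬝ᵥ M *ᵥ (P *ᵥ x) := by
  simp only [star_mulVec, dotProduct_mulVec, vecMul_vecMul]

lemma IsNegDefOn.map_mulVecLin {P : Matrix n n ℂ} {W : Submodule ℂ (n → ℂ)}
    (hW : (Pᴴ * M * P).IsNegDefOn W) :
    M.IsNegDefOn (W.map P.mulVecLin) := by
  rintro _ ⟨w, hw, rfl⟩ hw0
  have hw0 : w ≠ 0 := by rintro rfl; exact hw0 (map_zero _)
  simpa [star_dotProduct_conjTranspose_mul_mul_mulVec] using hW w hw hw0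

lemma negIndex_conjTranspose_mul_mul_le {P : Matrix n n ℂ} (hP : Function.Injective P.mulVec) :
    (Pᴴ * M * P).negIndex ≤ M.negIndex := by
  obtain ⟨W, hW, hrank⟩ := (Pᴴ * M * P).exists_isNegDefOn_finrank_eq_negIndex
  rw [← hrank, (Submodule.equivMapOfInjective P.mulVecLin hP W).finrank_eq]
  exact hW.map_mulVecLin.finrank_le_negIndex

variable [DecidableEq n]

lemma negIndex_conjTranspose_mul_mul {P : Matrix n n ℂ} (hP : IsUnit P) :
    (Pᴴ * M * P).negIndex = M.negIndex := by
  refine le_antisymm (negIndex_conjTranspose_mul_mul_le (mulVec_injective_iff_isUnit.mpr hP)) ?_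
  have hdet : IsUnit P.det := (isUnit_iff_isUnit_det P).mp hP
  have hdetH : IsUnit Pᴴ.det := by rw [det_conjTranspose]; exact hdet.star
  have hM : (P⁻¹)ᴴ * (Pᴴ * M * P) * P⁻¹ = M := by
    rw [conjTranspose_nonsing_inv, Matrix.mul_assoc, Matrix.mul_assoc, mul_nonsing_inv _ hdet,
      Matrix.mul_one, ← Matrix.mul_assoc, nonsing_inv_mul _ hdetH, Matrix.one_mul]
  calc M.negIndex = ((P⁻¹)ᴴ * (Pᴴ * M * P) * P⁻¹).negIndex := by rw [hM]
    _ ≤ (Pᴴ * M * P).negIndex :=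
      negIndex_conjTranspose_mul_mul_le
        (mulVec_injective_iff_isUnit.mpr ((isUnit_nonsing_inv_iff).mpr hP))

lemma re_star_dotProduct_diagonal_mulVec (d : n → ℝ) (x : n → ℂ) :
    (star x ⬝ᵥ diagonal (fun i => (d i : ℂ)) *ᵥ x).re = ∑ i, d i * ‖x i‖ ^ 2 := by
  simp [dotProduct, mulVec_diagonal, mul_left_comm _ (d _ : ℂ), Complex.conj_mul',
    Complex.re_sum, ← Complex.ofReal_pow]

lemma negIndex_diagonal (d : n → ℝ) :
    (diagonal fun i => (d i : ℂ)).negIndex = #{i | d i < 0} := by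
  set D := diagonal fun i => (d i : ℂ)
  let T : Set n := {i | d i < 0}
  have hcard : Fintype.card T = #{i | d i < 0} := Fintype.card_subtype _
  refine le_antisymm ?_ ?_
  · obtain ⟨W, hW, hrank⟩ := D.exists_isNegDefOn_finrank_eq_negIndex
    let restrict : W →ₗ[ℂ] (T → ℂ) := (LinearMap.funLeft ℂ ℂ Subtype.val).comp W.subtype
    have hinj : Function.Injective restrict := by
      rw [← LinearMap.ker_eq_bot, LinearMap.ker_eq_bot']
      intro x hx
      by_contra hx0
      have hxT : ∀ i ∈ T, (x : n → ℂ) i = 0 := fun i hi => congrFun hx ⟨i, hi⟩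
      refine (hW x x.2 (by simpa using hx0)).not_ge ?_
      rw [re_star_dotProduct_diagonal_mulVec]
      refine Finset.sum_nonneg fun i _ => ?_
      by_cases hi : i ∈ T
      · simp [hxT i hi]
      · exact mul_nonneg (not_lt.mp hi) (sq_nonneg _)
    rw [← hrank, ← hcard, ← Module.finrank_fintype_fun_eq_card ℂ]
    exact LinearMap.finrank_le_finrank_of_injective hinj
  · let W := ⨅ i ∈ Tᶜ, LinearMap.ker (LinearMap.proj i : (n → ℂ) →ₗ[ℂ] ℂ)
    have hrank : finrank ℂ W = #{i | d i < 0} := by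
      rw [(LinearMap.iInfKerProjEquiv ℂ (fun _ => ℂ) disjoint_compl_right (by simp)).finrank_eq,
        Module.finrank_fintype_fun_eq_card, hcard]
    rw [← hrank]
    refine IsNegDefOn.finrank_le_negIndex fun x hx hx0 => ?_
    have hxT : ∀ i ∉ T, x i = 0 := by simpa [W] using hx
    obtain ⟨j, hj⟩ := Function.ne_iff.mp hx0
    rw [re_star_dotProduct_diagonal_mulVec]
    refine Finset.sum_neg' (fun i _ => ?_) ⟨j, Finset.mem_univ _, ?_⟩
    · by_cases hi : i ∈ T
      · exact mul_nonpos_of_nonpos_of_nonneg (le_of_lt hi) (sq_nonneg _)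
      · simp [hxT i hi]
    · have hjT : j ∈ T := by_contra fun h => hj (hxT j h)
      exact mul_neg_of_neg_of_pos hjT (by positivity)

namespace IsHermitian

lemma isUnit_star_eigenvectorUnitary (hM : M.IsHermitian) :
    IsUnit (star (hM.eigenvectorUnitary : Matrix n n ℂ)) :=
  Unitary.isUnit_coe (U := star hM.eigenvectorUnitary)

lemma sub_smul_one_eq_conjTranspose_mul_diagonal_mul (hM : M.IsHermitian) (μ : ℝ) :
    M - (μ : ℂ) • 1 = (star (hM.eigenvectorUnitary : Matrix n n ℂ))ᴴ *
      diagonal (fun i => ((hM.eigenvalues i - μ : ℝ) : ℂ)) *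
        star (hM.eigenvectorUnitary : Matrix n n ℂ) := by
  set U : Matrix n n ℂ := (hM.eigenvectorUnitary : Matrix n n ℂ)
  have hU : U * star U = 1 := Unitary.mul_star_self_of_mem hM.eigenvectorUnitary.2
  have hD : diagonal (fun i => ((hM.eigenvalues i - μ : ℝ) : ℂ)) =
      diagonal (RCLike.ofReal ∘ hM.eigenvalues) - (μ : ℂ) • 1 := by
    ext i j
    by_cases h : i = j <;> simp [h]
  conv_lhs => rw [hM.spectral_theorem, Unitary.conjStarAlgAut_apply]
  rw [star_eq_conjTranspose, conjTranspose_conjTranspose, hD, Matrix.mul_sub, Matrix.sub_mul,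
    Matrix.mul_smul, Matrix.smul_mul, Matrix.mul_one, ← star_eq_conjTranspose, hU]

lemma negIndex_sub_smul_one (hM : M.IsHermitian) (μ : ℝ) :
    (M - (μ : ℂ) • 1).negIndex = #{i | hM.eigenvalues i < μ} := by
  rw [hM.sub_smul_one_eq_conjTranspose_mul_diagonal_mul μ,
    negIndex_conjTranspose_mul_mul hM.isUnit_star_eigenvectorUnitary, negIndex_diagonal]
  simp only [sub_neg]

lemma negIndex_eq (hM : M.IsHermitian) : M.negIndex = #{i | hM.eigenvalues i < 0} := by
  simpa using hM.negIndex_sub_smul_one 0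

end IsHermitian

variable {m : Type*} [Fintype m] [DecidableEq m]

lemma negIndex_fromBlocks_zero {M₁ : Matrix n n ℂ} {M₂ : Matrix m m ℂ} (h₁ : M₁.IsHermitian)
    (h₂ : M₂.IsHermitian) : (fromBlocks M₁ 0 0 M₂).negIndex = M₁.negIndex + M₂.negIndex := by
  have hM₁ := h₁.sub_smul_one_eq_conjTranspose_mul_diagonal_mul 0
  have hM₂ := h₂.sub_smul_one_eq_conjTranspose_mul_diagonal_mul 0
  simp only [Complex.ofReal_zero, zero_smul, sub_zero] at hM₁ hM₂
  set P₁ := star (h₁.eigenvectorUnitary : Matrix n n ℂ)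
  set P₂ := star (h₂.eigenvectorUnitary : Matrix m m ℂ)
  have hP : IsUnit (fromBlocks P₁ 0 0 P₂) := isUnit_fromBlocks_zero₂₁.mpr
    ⟨h₁.isUnit_star_eigenvectorUnitary, h₂.isUnit_star_eigenvectorUnitary⟩
  have hblocks : fromBlocks M₁ 0 0 M₂ = (fromBlocks P₁ 0 0 P₂)ᴴ *
      diagonal (fun i => ((Sum.elim h₁.eigenvalues h₂.eigenvalues i : ℝ) : ℂ)) *
        fromBlocks P₁ 0 0 P₂ := by
    have hdiag : (diagonal fun i => ((Sum.elim h₁.eigenvalues h₂.eigenvalues i : ℝ) : ℂ)) =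
        fromBlocks (diagonal fun i => (h₁.eigenvalues i : ℂ)) 0 0
          (diagonal fun i => (h₂.eigenvalues i : ℂ)) := by
      rw [fromBlocks_diagonal]
      congr 1
      ext (i | i) <;> rfl
    conv_lhs => rw [hM₁, hM₂]
    rw [hdiag, fromBlocks_conjTranspose, fromBlocks_multiply, fromBlocks_multiply]
    simp
  rw [hblocks, negIndex_conjTranspose_mul_mul hP, negIndex_diagonal, h₁.negIndex_eq,
    h₂.negIndex_eq, ← card_toLeft_add_card_toRight]
  congr 2 <;> ext <;> simp

lemma negIndex_fromBlocks {A : Matrix n n ℂ} (B : Matrix n m ℂ) (D : Matrix m m ℂ)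
    (hA : A.IsHermitian) (hAu : IsUnit A) (hS : (D - Bᴴ * A⁻¹ * B).IsHermitian) :
    (fromBlocks A B Bᴴ D).negIndex = A.negIndex + (D - Bᴴ * A⁻¹ * B).negIndex := by
  obtain ⟨_⟩ := hAu.nonempty_invertible
  have hR : IsUnit (fromBlocks 1 (A⁻¹ * B) 0 1 : Matrix (n ⊕ m) (n ⊕ m) ℂ) :=
    isUnit_fromBlocks_zero₂₁.mpr ⟨isUnit_one, isUnit_one⟩
  have hLDL : fromBlocks A B Bᴴ D = (fromBlocks 1 (A⁻¹ * B) 0 1)ᴴ *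
      fromBlocks A 0 0 (D - Bᴴ * A⁻¹ * B) * fromBlocks 1 (A⁻¹ * B) 0 1 := by
    rw [fromBlocks_eq_of_invertible₁₁, invOf_eq_nonsing_inv, fromBlocks_conjTranspose,
      conjTranspose_mul, hA.inv.eq]
    simp
  rw [hLDL, negIndex_conjTranspose_mul_mul hR, negIndex_fromBlocks_zero hA hS]

end Matrix

theorem haynsworth_inertia_general (p k : ℕ)
    (A : Matrix (Fin p) (Fin p) ℂ) (B : Matrix (Fin p) (Fin k) ℂ)
    (C : Matrix (Fin k) (Fin k) ℂ)
    (hH : (Matrix.fromBlocks A B Bᴴ C).IsHermitian)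
    (μ : ℝ) (hμ : (μ : ℂ) ∉ spectrum ℂ A)
    (hAμ : (A - (μ : ℂ) • (1 : Matrix (Fin p) (Fin p) ℂ)).IsHermitian)
    (hS : ((C - (μ : ℂ) • (1 : Matrix (Fin k) (Fin k) ℂ)) -
        Bᴴ * (A - (μ : ℂ) • (1 : Matrix (Fin p) (Fin p) ℂ))⁻¹ * B).IsHermitian) :
    (Finset.univ.filter fun i => hH.eigenvalues i < μ).card =
      (Finset.univ.filter fun i => hAμ.eigenvalues i < 0).card +
        (Finset.univ.filter fun i => hS.eigenvalues i < 0).card := by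
  have hAμ_unit : IsUnit (A - (μ : ℂ) • 1) := by
    rw [← neg_sub, ← Algebra.algebraMap_eq_smul_one]
    exact (spectrum.notMem_iff.mp hμ).neg
  have hshift : fromBlocks A B Bᴴ C - (μ : ℂ) • 1 =
      fromBlocks (A - (μ : ℂ) • 1) B Bᴴ (C - (μ : ℂ) • 1) := by
    rw [← fromBlocks_one, fromBlocks_smul, sub_eq_add_neg, fromBlocks_neg, fromBlocks_add]
    simp [sub_eq_add_neg]
  rw [← hH.negIndex_sub_smul_one, hshift, negIndex_fromBlocks B _ hAμ hAμ_unit hS,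
    hAμ.negIndex_eq, hS.negIndex_eq]

/-- **Haynsworth inertia additivity formula.** Let `H = [[A, B], [Bᴴ, C]]` be a Hermitian
block matrix and let `μ` be a real number which is not an eigenvalue of `A`. Then the
number of eigenvalues of `H` strictly less than `μ` (counted with multiplicity) equals
the number of negative eigenvalues of `A − μI` plus the number of negative eigenvalues of
the Schur complement `S_μ = (C − μI) − Bᴴ (A − μI)⁻¹ B`. -/
theorem haynsworth_inertia (p k : ℕ)
    (A : Matrix (Fin p) (Fin p) ℂ) (B : Matrix (Fin p) (Fin k) ℂ)
    (C : Matrix (Fin k) (Fin k) ℂ) (hA : A.IsHermitian) (hC : C.IsHermitian)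
    (hH : (Matrix.fromBlocks A B Bᴴ C).IsHermitian)
    (μ : ℝ) (hμ : (μ : ℂ) ∉ spectrum ℂ A)
    (hAμ : (A - (μ : ℂ) • (1 : Matrix (Fin p) (Fin p) ℂ)).IsHermitian)
    (hS : ((C - (μ : ℂ) • (1 : Matrix (Fin k) (Fin k) ℂ)) -
        Bᴴ * (A - (μ : ℂ) • (1 : Matrix (Fin p) (Fin p) ℂ))⁻¹ * B).IsHermitian) :
    (Finset.univ.filter fun i => hH.eigenvalues i < μ).card =
      (Finset.univ.filter fun i => hAμ.eigenvalues i < 0).card +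
        (Finset.univ.filter fun i => hS.eigenvalues i < 0).card :=
  haynsworth_inertia_general p k A B C hH μ hμ hAμ hS
end

section
/- Let f : ℝ → ℝ≥0 be non-increasing on [q_min, ∞) and such that t ↦ t f(t) is integrable on [q_min, ∞), and let b > 0. Then for q ≥ q_min + √2·b, Σ_{(m,n) ∈ (ℕ∖{0})², ‖b(m,n)‖ ≥ q} f(‖b(m,n)‖) ≤ (π/(2b²)) ∫_{q−√2 b}^{∞} t f(t) dt, by comparing each lattice point value with the average of f(|·|) over the square cell of side b having that lattice point as its farthest vertex from the origin. -/
/-!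
A lattice point `b (m, n)` with `m, n ≥ 1` is the corner farthest from the origin of the cell
`C = (b(m-1), bm] × (b(n-1), bn]`. On `C` the radius `|x|` lies between `|b (m, n)| - √2 b` and
`|b (m, n)|`, so for a tail point `f(|b (m, n)|) ≤ f(|x|)` and `|x| ≥ q - √2 b`. The cells are
disjoint squares of area `b²` in the open quadrant, hence `b²` times the tail sum is at most the
integral of `f(|x|)` over `{x in the quadrant : |x| ≥ q - √2 b}`, which polar coordinates turn
into `(π/2) ∫_{q - √2 b}^∞ t f(t) dt`.
-/

open MeasureTheory
open scoped ENNReal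
open Real Set Function

theorem sqrt_sq_add_sq_le_add_sqrt_two_mul (u v : ℝ) {s : ℝ} (hs : 0 ≤ s) :
    √((u + s) ^ 2 + (v + s) ^ 2) ≤ √(u ^ 2 + v ^ 2) + √2 * s := by
  have huv : u + v ≤ √2 * √(u ^ 2 + v ^ 2) := by
    rw [← sqrt_mul zero_le_two]
    exact (le_abs_self _).trans (abs_le_sqrt (by nlinarith [sq_nonneg (u - v)]))
  have h2 : √2 ^ 2 = 2 := sq_sqrt zero_le_two
  have hn : √(u ^ 2 + v ^ 2) ^ 2 = u ^ 2 + v ^ 2 := sq_sqrt (by positivity)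
  rw [sqrt_le_left (by positivity)]
  linear_combination (2 : ℝ) * mul_le_mul_of_nonneg_left huv hs - s ^ 2 * h2 - hn

theorem mul_sqrt_sq_add_sq {b : ℝ} (hb : 0 ≤ b) (x y : ℝ) :
    b * √(x ^ 2 + y ^ 2) = √((b * x) ^ 2 + (b * y) ^ 2) := by
  rw [mul_pow, mul_pow, ← mul_add, sqrt_mul (sq_nonneg b), sqrt_sq hb]

def latticeCell (b : ℝ) (p : ℕ × ℕ) : Set (ℝ × ℝ) :=
  Ioc (b * (p.1 - 1)) (b * p.1) ×ˢ Ioc (b * (p.2 - 1)) (b * p.2)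

theorem measurableSet_latticeCell (b : ℝ) (p : ℕ × ℕ) : MeasurableSet (latticeCell b p) :=
  measurableSet_Ioc.prod measurableSet_Ioc

theorem volume_latticeCell (b : ℝ) (p : ℕ × ℕ) :
    volume (latticeCell b p) = ENNReal.ofReal b ^ 2 := by
  rw [latticeCell, Measure.volume_eq_prod, Measure.prod_prod, volume_Ioc, volume_Ioc, sq]
  ring_nf

theorem pairwise_disjoint_Ioc_mul_natCast {b : ℝ} (hb : 0 ≤ b) :
    Pairwise (Disjoint on fun k : ℕ => Ioc (b * (k - 1)) (b * k)) := by
  have hmono : Monotone fun k : ℤ => b * k := fun _ _ h =>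
    mul_le_mul_of_nonneg_left (Int.cast_le.2 h) hb
  intro k l hkl
  simpa [onFun, Order.pred_eq_sub_one] using
    hmono.pairwise_disjoint_on_Ioc_pred (Nat.cast_injective.ne hkl : (k : ℤ) ≠ l)

theorem pairwise_disjoint_latticeCell {b : ℝ} (hb : 0 ≤ b) :
    Pairwise (Disjoint on latticeCell b) := by
  intro p p' hne
  rw [Function.onFun, latticeCell, latticeCell, disjoint_prod]
  rcases not_and_or.1 (Prod.ext_iff.not.1 hne) with h | h
  · exact Or.inl (pairwise_disjoint_Ioc_mul_natCast hb h)
  · exact Or.inr (pairwise_disjoint_Ioc_mul_natCast hb h)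

section LatticeCell

variable {b : ℝ} {p : ℕ × ℕ} {x : ℝ × ℝ}

theorem latticeCell_subset_quadrant (hb : 0 ≤ b) (hp : 1 ≤ p.1 ∧ 1 ≤ p.2) :
    latticeCell b p ⊆ Ioi 0 ×ˢ Ioi 0 := by
  rintro x ⟨⟨h₁, -⟩, ⟨h₂, -⟩⟩
  have hp₁ : (1 : ℝ) ≤ p.1 := by exact_mod_cast hp.1
  have hp₂ : (1 : ℝ) ≤ p.2 := by exact_mod_cast hp.2
  exact ⟨(mul_nonneg hb (sub_nonneg.2 hp₁)).trans_lt h₁,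
    (mul_nonneg hb (sub_nonneg.2 hp₂)).trans_lt h₂⟩

theorem sqrt_le_of_mem_latticeCell (hb : 0 ≤ b) (hp : 1 ≤ p.1 ∧ 1 ≤ p.2)
    (hx : x ∈ latticeCell b p) : √(x.1 ^ 2 + x.2 ^ 2) ≤ b * √((p.1 : ℝ) ^ 2 + (p.2 : ℝ) ^ 2) := by
  obtain ⟨hx₁, hx₂⟩ := latticeCell_subset_quadrant hb hp hx
  rw [mul_sqrt_sq_add_sq hb]
  gcongr
  exacts [hx₁.le, hx.1.2, hx₂.le, hx.2.2]

theorem sub_le_sqrt_of_mem_latticeCell (hb : 0 ≤ b) (hp : 1 ≤ p.1 ∧ 1 ≤ p.2)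
    (hx : x ∈ latticeCell b p) :
    b * √((p.1 : ℝ) ^ 2 + (p.2 : ℝ) ^ 2) - √2 * b ≤ √(x.1 ^ 2 + x.2 ^ 2) := by
  have hp₁ : (1 : ℝ) ≤ p.1 := by exact_mod_cast hp.1
  have hp₂ : (1 : ℝ) ≤ p.2 := by exact_mod_cast hp.2
  have hcorner := sqrt_sq_add_sq_le_add_sqrt_two_mul (b * (p.1 - 1)) (b * (p.2 - 1)) hb
  simp only [mul_sub, mul_one, sub_add_cancel] at hcorner
  have hmono : √((b * p.1 - b) ^ 2 + (b * p.2 - b) ^ 2) ≤ √(x.1 ^ 2 + x.2 ^ 2) := by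
    have h₁ : 0 ≤ b * p.1 - b := by nlinarith
    have h₂ : 0 ≤ b * p.2 - b := by nlinarith
    gcongr
    · simpa [mul_sub] using hx.1.1.le
    · simpa [mul_sub] using hx.2.1.le
  rw [mul_sqrt_sq_add_sq hb]
  linarith

theorem ofReal_le_of_mem_latticeCell {f : ℝ → ℝ} {qmin q : ℝ} (hf : AntitoneOn f (Ici qmin))
    (hb : 0 ≤ b) (hq : qmin + √2 * b ≤ q)
    (hp : 1 ≤ p.1 ∧ 1 ≤ p.2 ∧ q ≤ b * √((p.1 : ℝ) ^ 2 + (p.2 : ℝ) ^ 2))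
    (hx : x ∈ latticeCell b p) :
    ENNReal.ofReal (f (b * √((p.1 : ℝ) ^ 2 + (p.2 : ℝ) ^ 2))) ≤
      (Ioi 0 ×ˢ Ioi 0).indicator (fun x =>
        (Ici (q - √2 * b)).indicator (fun t => ENNReal.ofReal (f t)) √(x.1 ^ 2 + x.2 ^ 2)) x := by
  obtain ⟨hp₁, hp₂, hpq⟩ := hp
  have hxr : q - √2 * b ≤ √(x.1 ^ 2 + x.2 ^ 2) := by
    linarith [sub_le_sqrt_of_mem_latticeCell hb ⟨hp₁, hp₂⟩ hx]
  have h2b : 0 ≤ √2 * b := by positivity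
  rw [indicator_of_mem (latticeCell_subset_quadrant hb ⟨hp₁, hp₂⟩ hx),
    indicator_of_mem (mem_Ici.2 hxr)]
  exact ENNReal.ofReal_le_ofReal (hf (mem_Ici.2 (by linarith)) (mem_Ici.2 (by linarith))
    (sqrt_le_of_mem_latticeCell hb ⟨hp₁, hp₂⟩ hx))

end LatticeCell

theorem cos_pos_and_sin_pos_iff {θ : ℝ} (hθ : θ ∈ Ioo (-π) π) :
    0 < cos θ ∧ 0 < sin θ ↔ θ ∈ Ioo 0 (π / 2) := by
  refine ⟨fun ⟨hcos, hsin⟩ => ⟨?_, ?_⟩, fun h => ⟨?_, ?_⟩⟩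
  · by_contra! h
    exact hsin.not_ge (sin_nonpos_of_nonpos_of_neg_pi_le h hθ.1.le)
  · by_contra! h
    exact hcos.not_ge (cos_nonpos_of_pi_div_two_le_of_le h (by linarith [hθ.2]))
  · exact cos_pos_of_mem_Ioo ⟨by linarith [h.1, pi_pos], h.2⟩
  · exact sin_pos_of_pos_of_lt_pi h.1 (by linarith [h.2, pi_pos])

theorem lintegral_quadrant_comp_sqrt {g : ℝ → ℝ≥0∞}
    (hg : AEMeasurable g (volume.restrict (Ioi 0))) :
    ∫⁻ x in Ioi 0 ×ˢ Ioi 0, g √(x.1 ^ 2 + x.2 ^ 2) =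
      ENNReal.ofReal (π / 2) * ∫⁻ t in Ioi 0, ENNReal.ofReal t * g t := by
  have hpolar : ∀ p ∈ polarCoord.target,
      ENNReal.ofReal p.1 • (Ioi 0 ×ˢ Ioi 0).indicator (fun x => g √(x.1 ^ 2 + x.2 ^ 2))
        (polarCoord.symm p) = ENNReal.ofReal p.1 * g p.1 * (Ioo 0 (π / 2)).indicator 1 p.2 := by
    rintro ⟨t, θ⟩ ⟨ht, hθ⟩
    change 0 < t at ht
    change θ ∈ Ioo (-π) π at hθ
    have hsymm : polarCoord.symm (t, θ) = (t * cos θ, t * sin θ) := rfl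
    have hmem : (t * cos θ, t * sin θ) ∈ Ioi 0 ×ˢ Ioi 0 ↔ θ ∈ Ioo 0 (π / 2) := by
      simpa [mul_pos_iff_of_pos_left ht] using cos_pos_and_sin_pos_iff hθ
    have hnorm : √((t * cos θ) ^ 2 + (t * sin θ) ^ 2) = t := by
      rw [mul_pow, mul_pow, ← mul_add, cos_sq_add_sin_sq, mul_one, sqrt_sq ht.le]
    rw [hsymm, smul_eq_mul]
    by_cases hθ' : θ ∈ Ioo 0 (π / 2)
    · rw [indicator_of_mem (hmem.2 hθ'), indicator_of_mem hθ', hnorm, Pi.one_apply, mul_one]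
    · rw [indicator_of_notMem (mt hmem.1 hθ'), indicator_of_notMem hθ', mul_zero, mul_zero]
  have hangle : ∫⁻ θ in Ioo (-π) π, (Ioo 0 (π / 2)).indicator 1 θ = ENNReal.ofReal (π / 2) := by
    rw [lintegral_indicator_one measurableSet_Ioo, Measure.restrict_apply measurableSet_Ioo,
      inter_eq_left.2 (Ioo_subset_Ioo (by linarith [pi_pos]) (by linarith [pi_pos])),
      volume_Ioo, sub_zero]
  rw [← lintegral_indicator (measurableSet_Ioi.prod measurableSet_Ioi),
    ← lintegral_comp_polarCoord_symm,
    setLIntegral_congr_fun polarCoord.open_target.measurableSet hpolar,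
    show polarCoord.target = Ioi 0 ×ˢ Ioo (-π) π from rfl, Measure.volume_eq_prod,
    ← Measure.prod_restrict,
    lintegral_prod_mul (by fun_prop : AEMeasurable (fun t => ENNReal.ofReal t * g t) _)
      (measurable_one.indicator measurableSet_Ioo).aemeasurable,
    hangle, mul_comm]

theorem tsum_mul_measure_le_lintegral {α ι : Type*} [MeasurableSpace α] [Countable ι]
    {μ : Measure α} {s : ι → Set α} (hs : ∀ i, MeasurableSet (s i))
    (hd : Pairwise (Disjoint on s)) {a : ι → ℝ≥0∞} {φ : α → ℝ≥0∞}
    (h : ∀ i, ∀ x ∈ s i, a i ≤ φ x) : ∑' i, a i * μ (s i) ≤ ∫⁻ x, φ x ∂μ :=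
  calc ∑' i, a i * μ (s i) = ∑' i, ∫⁻ _ in s i, a i ∂μ := by simp_rw [setLIntegral_const]
    _ ≤ ∑' i, ∫⁻ x in s i, φ x ∂μ := ENNReal.tsum_le_tsum fun i => setLIntegral_mono' (hs i) (h i)
    _ = ∫⁻ x in ⋃ i, s i, φ x ∂μ := (lintegral_iUnion hs hd φ).symm
    _ ≤ ∫⁻ x, φ x ∂μ := setLIntegral_le_lintegral _ _

theorem tsum_le_of_tsum_ofReal_le {ι : Type*} {a : ι → ℝ} (ha : ∀ i, 0 ≤ a i) {c : ℝ}
    (hc : 0 ≤ c) (h : ∑' i, ENNReal.ofReal (a i) ≤ ENNReal.ofReal c) : ∑' i, a i ≤ c :=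
  calc ∑' i, a i = (∑' i, ENNReal.ofReal (a i)).toReal := by
        rw [ENNReal.tsum_toReal_eq fun _ => ENNReal.ofReal_ne_top]
        simp only [ENNReal.toReal_ofReal (ha _)]
    _ ≤ (ENNReal.ofReal c).toReal := ENNReal.toReal_mono ENNReal.ofReal_ne_top h
    _ = c := ENNReal.toReal_ofReal hc

theorem aemeasurable_indicator_Ici_ofReal {μ : Measure ℝ} {f : ℝ → ℝ} {r : ℝ}
    (hf : AntitoneOn f (Ici r)) :
    AEMeasurable ((Ici r).indicator fun t => ENNReal.ofReal (f t)) μ :=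
  (aemeasurable_indicator_iff measurableSet_Ici).2 <| ENNReal.measurable_ofReal.comp_aemeasurable <|
    aemeasurable_restrict_of_antitoneOn measurableSet_Ici hf

theorem lintegral_Ioi_ofReal_mul_indicator_Ici_le {f : ℝ → ℝ} {r : ℝ} (hr : 0 ≤ r)
    (hf : ∀ t ∈ Ici r, 0 ≤ f t) (hint : IntegrableOn (fun t => t * f t) (Ici r)) :
    ∫⁻ t in Ioi 0, ENNReal.ofReal t * (Ici r).indicator (fun t => ENNReal.ofReal (f t)) t ≤
      ENNReal.ofReal (∫ t in Ici r, t * f t) := by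
  have hnn : ∀ t ∈ Ici r, 0 ≤ t * f t := fun t ht => mul_nonneg (hr.trans ht) (hf t ht)
  rw [ofReal_integral_eq_lintegral_ofReal hint
      ((ae_restrict_iff' measurableSet_Ici).2 (ae_of_all _ hnn)),
    ← lintegral_indicator measurableSet_Ici]
  refine (setLIntegral_le_lintegral _ _).trans (lintegral_mono fun t => ?_)
  by_cases ht : t ∈ Ici r
  · rw [indicator_of_mem ht, indicator_of_mem ht, ENNReal.ofReal_mul (hr.trans ht)]
  · rw [indicator_of_notMem ht, indicator_of_notMem ht, mul_zero]

/-- **Two-dimensional quarter-lattice tail-sum bound.** Let `f : ℝ → ℝ` be nonnegative,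
non-increasing on `[q_min, ∞)` with `t ↦ t f t` integrable there, and let `b > 0`.  Then
for `q ≥ q_min + √2 b`, the tail sum over the positive-quadrant lattice points satisfies
`Σ_{(m,n) ∈ (ℕ∖{0})², b√(m²+n²) ≥ q} f(b√(m²+n²)) ≤ (π/(2b²)) ∫_{q−√2 b}^{∞} t f(t) dt`. -/
theorem lattice_tail_sum_two_dim
    (f : ℝ → ℝ) (hf_nonneg : ∀ t, 0 ≤ f t)
    (qmin : ℝ) (hqmin : 0 ≤ qmin)
    (hf_anti : AntitoneOn f (Set.Ici qmin))
    (hf_int : IntegrableOn (fun t => t * f t) (Set.Ici qmin))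
    (b : ℝ) (hb : 0 < b) (q : ℝ) (hq : qmin + Real.sqrt 2 * b ≤ q) :
    (∑' p : {p : ℕ × ℕ // 1 ≤ p.1 ∧ 1 ≤ p.2 ∧
        q ≤ b * Real.sqrt ((p.1 : ℝ) ^ 2 + (p.2 : ℝ) ^ 2)},
      f (b * Real.sqrt (((p : ℕ × ℕ).1 : ℝ) ^ 2 + ((p : ℕ × ℕ).2 : ℝ) ^ 2))) ≤
      (Real.pi / (2 * b ^ 2)) * ∫ t in Set.Ici (q - Real.sqrt 2 * b), t * f t := by
  set r := q - √2 * b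
  set S := {p : ℕ × ℕ // 1 ≤ p.1 ∧ 1 ≤ p.2 ∧ q ≤ b * √((p.1 : ℝ) ^ 2 + (p.2 : ℝ) ^ 2)}
  have hr : qmin ≤ r := by linarith [show 0 ≤ √2 * b by positivity]
  have hsum := tsum_mul_measure_le_lintegral (μ := volume)
    (fun p : S => measurableSet_latticeCell b p.1)
    ((pairwise_disjoint_latticeCell hb.le).comp_of_injective Subtype.val_injective)
    (fun p _ hx => ofReal_le_of_mem_latticeCell hf_anti hb.le hq p.2 hx)
  rw [lintegral_indicator (measurableSet_Ioi.prod measurableSet_Ioi),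
    lintegral_quadrant_comp_sqrt
      (aemeasurable_indicator_Ici_ofReal (hf_anti.mono (Ici_subset_Ici.2 hr)))] at hsum
  simp only [volume_latticeCell, ENNReal.tsum_mul_right] at hsum
  have hradial := lintegral_Ioi_ofReal_mul_indicator_Ici_le (hqmin.trans hr)
    (fun t _ => hf_nonneg t) (hf_int.mono_set (Ici_subset_Ici.2 hr))
  have hJ : 0 ≤ ∫ t in Ici r, t * f t := setIntegral_nonneg measurableSet_Ici
    fun t ht => mul_nonneg (hqmin.trans (hr.trans ht)) (hf_nonneg t)
  refine tsum_le_of_tsum_ofReal_le (fun _ => hf_nonneg _) (by positivity) ?_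
  rw [show π / (2 * b ^ 2) * ∫ t in Ici r, t * f t = π / 2 * (∫ t in Ici r, t * f t) / b ^ 2 by
      ring,
    ENNReal.ofReal_div_of_pos (by positivity), ENNReal.ofReal_mul (by positivity),
    ENNReal.le_div_iff_mul_le (Or.inl (by positivity)) (Or.inl ENNReal.ofReal_ne_top),
    ENNReal.ofReal_pow hb.le]
  exact hsum.trans (by gcongr)
end

section
/- Let H be Hermitian and let X be a subspace such that the compression A = P_X H P_X|_X has N-th and (N+1)-th eigenvalues λ̃_N < λ̃_{N+1}. If for some μ ∈ (λ̃_N, λ̃_{N+1}) the Schur complement S_μ = (C − μ) − B*(A − μ)⁻¹B is positive definite on X⊥, then H has exactly N eigenvalues (with multiplicity) strictly below μ; in particular the (N+1)-th eigenvalue λ_{N+1} of H satisfies λ_{N+1} ≥ μ. -/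
/-!
Factor `H - μ = L · diag(A - μ, S_μ) · Lᴴ` with `L` block unit lower triangular (the block
`LDLᴴ` decomposition behind the Schur complement). For Hermitian `M`, the number of
eigenvalues below `μ` is the largest dimension of a subspace on which `x ↦ xᴴ (M - μ) x` is
negative definite (diagonalise `M`), and this largest dimension is unchanged by congruence
(Sylvester's law of inertia). For `diag(A - μ, S_μ)` with `S_μ ⪰ 0`, projecting a negative
subspace onto the first block is injective, so the largest dimension is that of `A - μ`,
which is `N`. The bound on the sorted eigenvalues then follows by counting.
-/

open Matrix Module
open scoped ComplexOrder Finset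

theorem Submodule.finrank_map_eq_of_disjoint_ker {R M M₂ : Type*} [Ring R] [AddCommGroup M]
    [AddCommGroup M₂] [Module R M] [Module R M₂] {W : Submodule R M} {f : M →ₗ[R] M₂}
    (h : Disjoint W (LinearMap.ker f)) : finrank R (W.map f) = finrank R W := by
  rw [← LinearMap.range_domRestrict]
  exact LinearMap.finrank_range_of_inj (LinearMap.injective_domRestrict_iff.mpr h)

namespace Matrix

theorem fromBlocks_sub_smul_one {α l m : Type*} [Ring α] [DecidableEq l] [DecidableEq m]
    (A : Matrix l l α) (B : Matrix l m α) (C : Matrix m l α) (D : Matrix m m α) (c : α) :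
    fromBlocks A B C D - c • 1 = fromBlocks (A - c • 1) B C (D - c • 1) := by
  simp [← fromBlocks_one, fromBlocks_smul, sub_eq_add_neg, fromBlocks_neg, fromBlocks_add]

variable {𝕜 : Type*} [RCLike 𝕜] {m n p q : Type*} [Fintype m] [Fintype n] [Fintype p] [Fintype q]

def NegDefOn (M : Matrix n n 𝕜) (W : Submodule 𝕜 (n → 𝕜)) : Prop :=
  ∀ x ∈ W, x ≠ 0 → star x ⬝ᵥ (M *ᵥ x) < 0

/-- The negative index of inertia of a Hermitian `M` is the greatest element of this set. -/
def negDefDims (M : Matrix n n 𝕜) : Set ℕ :=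
  {d | ∃ W : Submodule 𝕜 (n → 𝕜), M.NegDefOn W ∧ finrank 𝕜 W = d}

theorem negDefDims_subset_of_le {M : Matrix n n 𝕜} {N : Matrix m m 𝕜}
    (f : (n → 𝕜) →ₗ[𝕜] (m → 𝕜)) (hf : ∀ x, star (f x) ⬝ᵥ (N *ᵥ f x) ≤ star x ⬝ᵥ (M *ᵥ x)) :
    M.negDefDims ⊆ N.negDefDims := by
  rintro _ ⟨W, hW, rfl⟩
  refine ⟨W.map f, ?_, Submodule.finrank_map_eq_of_disjoint_ker ?_⟩
  · rintro _ ⟨x, hx, rfl⟩ hfx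
    exact (hf x).trans_lt (hW x hx (by rintro rfl; simp at hfx))
  · refine Submodule.disjoint_def.mpr fun x hx hfx => by_contra fun hx0 => ?_
    have := hf x
    rw [LinearMap.mem_ker.mp hfx] at this
    simp only [star_zero, zero_dotProduct] at this
    exact this.not_gt (hW x hx hx0)

theorem star_dotProduct_mul_mul_conjTranspose_mulVec (L : Matrix n m 𝕜) (M : Matrix m m 𝕜)
    (x : n → 𝕜) : star x ⬝ᵥ ((L * M * Lᴴ) *ᵥ x) = star (Lᴴ *ᵥ x) ⬝ᵥ (M *ᵥ (Lᴴ *ᵥ x)) := by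
  simp only [← mulVec_mulVec, dotProduct_mulVec, star_mulVec, conjTranspose_conjTranspose]

theorem negDefDims_mul_mul_conjTranspose_subset (L : Matrix n m 𝕜) (M : Matrix m m 𝕜) :
    (L * M * Lᴴ).negDefDims ⊆ M.negDefDims :=
  negDefDims_subset_of_le Lᴴ.mulVecLin fun x =>
    (star_dotProduct_mul_mul_conjTranspose_mulVec L M x).ge

theorem star_dotProduct_fromBlocks_zero_mulVec (M : Matrix p p 𝕜) (S : Matrix q q 𝕜)
    (x : p ⊕ q → 𝕜) : star x ⬝ᵥ (fromBlocks M 0 0 S *ᵥ x) =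
      star (x ∘ Sum.inl) ⬝ᵥ (M *ᵥ (x ∘ Sum.inl)) + star (x ∘ Sum.inr) ⬝ᵥ (S *ᵥ (x ∘ Sum.inr)) := by
  conv_lhs => rw [← Sum.elim_comp_inl_inr x, fromBlocks_mulVec]
  simp [dotProduct, Fintype.sum_sum_type]

theorem negDefDims_fromBlocks_zero (M : Matrix p p 𝕜) {S : Matrix q q 𝕜} (hS : S.PosSemidef) :
    (fromBlocks M 0 0 S).negDefDims = M.negDefDims := by
  refine (negDefDims_subset_of_le (LinearMap.funLeft 𝕜 𝕜 Sum.inl) fun x => ?_).antisymm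
    (negDefDims_subset_of_le ((LinearEquiv.sumArrowLequivProdArrow p q 𝕜 𝕜).symm.toLinearMap ∘ₗ
      LinearMap.inl 𝕜 _ _) fun x => ?_)
  · rw [star_dotProduct_fromBlocks_zero_mulVec]
    exact le_add_of_nonneg_right (hS.dotProduct_mulVec_nonneg _)
  · rw [star_dotProduct_fromBlocks_zero_mulVec]
    simp [Function.comp_def, ← Pi.zero_def]

variable [DecidableEq n] [DecidableEq p] [DecidableEq q]

theorem negDefDims_mul_mul_conjTranspose {L : Matrix n n 𝕜} (hL : IsUnit L)
    (M : Matrix n n 𝕜) : (L * M * Lᴴ).negDefDims = M.negDefDims := by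
  refine (negDefDims_mul_mul_conjTranspose_subset L M).antisymm ?_
  have hdet : IsUnit L.det := (isUnit_iff_isUnit_det L).mp hL
  have : L⁻¹ * (L * M * Lᴴ) * L⁻¹ᴴ = M := by
    rw [conjTranspose_nonsing_inv, Matrix.mul_assoc, Matrix.mul_assoc,
      mul_nonsing_inv _ (by simpa using hdet.star), Matrix.mul_one, ← Matrix.mul_assoc,
      nonsing_inv_mul _ hdet, Matrix.one_mul]
  simpa only [this] using negDefDims_mul_mul_conjTranspose_subset L⁻¹ (L * M * Lᴴ)

theorem star_dotProduct_diagonal_mulVec (d : n → ℝ) (x : n → 𝕜) :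
    star x ⬝ᵥ (diagonal (fun i => (d i : 𝕜)) *ᵥ x) = ((∑ i, d i * ‖x i‖ ^ 2 : ℝ) : 𝕜) := by
  simp only [dotProduct, mulVec_diagonal, Pi.star_apply, RCLike.star_def]
  push_cast
  refine Finset.sum_congr rfl fun i _ => ?_
  rw [mul_left_comm, RCLike.conj_mul]

theorem finrank_le_of_negDefOn_diagonal (d : n → ℝ) {W : Submodule 𝕜 (n → 𝕜)}
    (hW : (diagonal fun i => (d i : 𝕜)).NegDefOn W) : finrank 𝕜 W ≤ #{i | d i < 0} := by
  let restrict := LinearMap.funLeft 𝕜 𝕜 (Subtype.val : {i // d i < 0} → n)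
  have hdisj : Disjoint W (LinearMap.ker restrict) := by
    refine Submodule.disjoint_def.mpr fun x hx hker => by_contra fun hx0 => ?_
    have hzero : ∀ i, d i < 0 → x i = 0 := fun i hi =>
      congrFun (LinearMap.mem_ker.mp hker) ⟨i, hi⟩
    have hnonneg : 0 ≤ ∑ i, d i * ‖x i‖ ^ 2 := Finset.sum_nonneg fun i _ => by
      by_cases hi : d i < 0
      · simp [hzero i hi]
      · exact mul_nonneg (not_lt.mp hi) (sq_nonneg _)
    have := hW x hx hx0
    rw [star_dotProduct_diagonal_mulVec, RCLike.ofReal_lt_zero] at this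
    exact this.not_ge hnonneg
  calc finrank 𝕜 W = finrank 𝕜 (W.map restrict) :=
        (Submodule.finrank_map_eq_of_disjoint_ker hdisj).symm
    _ ≤ finrank 𝕜 ({i // d i < 0} → 𝕜) := Submodule.finrank_le _
    _ = #{i | d i < 0} := by rw [finrank_fintype_fun_eq_card, Fintype.card_subtype]

theorem exists_negDefOn_diagonal (d : n → ℝ) : ∃ W : Submodule 𝕜 (n → 𝕜),
    (diagonal fun i => (d i : 𝕜)).NegDefOn W ∧ #{i | d i < 0} ≤ finrank 𝕜 W := by
  let restrict := LinearMap.funLeft 𝕜 𝕜 (Subtype.val : {i // ¬ d i < 0} → n)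
  refine ⟨LinearMap.ker restrict, fun x hker hx0 => ?_, ?_⟩
  · have hzero : ∀ i, ¬ d i < 0 → x i = 0 := fun i hi =>
      congrFun (LinearMap.mem_ker.mp hker) ⟨i, hi⟩
    obtain ⟨j, hj⟩ := Function.ne_iff.mp hx0
    rw [star_dotProduct_diagonal_mulVec, RCLike.ofReal_lt_zero]
    refine Finset.sum_neg' (fun i _ => ?_) ⟨j, Finset.mem_univ j, ?_⟩
    · by_cases hi : d i < 0
      · exact mul_nonpos_of_nonpos_of_nonneg hi.le (sq_nonneg _)
      · simp [hzero i hi]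
    · have hdj : d j < 0 := by_contra fun h => hj (hzero j h)
      exact mul_neg_of_neg_of_pos hdj (pow_pos (norm_pos_iff.mpr hj) 2)
  · have hsurj : LinearMap.range restrict = ⊤ := LinearMap.range_eq_top.mpr
      (LinearMap.funLeft_surjective_of_injective _ _ _ Subtype.val_injective)
    have := LinearMap.finrank_range_add_finrank_ker restrict
    rw [hsurj, finrank_top, finrank_fintype_fun_eq_card, finrank_fintype_fun_eq_card,
      Fintype.card_subtype_compl] at this
    have hle := Fintype.card_subtype_le (fun i => d i < 0)
    rw [Fintype.card_subtype] at this hle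
    omega

theorem isGreatest_negDefDims_diagonal (d : n → ℝ) :
    IsGreatest (diagonal fun i => (d i : 𝕜)).negDefDims #{i | d i < 0} := by
  obtain ⟨W, hW, hle⟩ := exists_negDefOn_diagonal (𝕜 := 𝕜) d
  refine ⟨⟨W, hW, le_antisymm (finrank_le_of_negDefOn_diagonal d hW) hle⟩, ?_⟩
  rintro _ ⟨V, hV, rfl⟩
  exact finrank_le_of_negDefOn_diagonal d hV

theorem IsHermitian.sub_smul_one_eq {M : Matrix n n 𝕜} (hM : M.IsHermitian) (μ : ℝ) :
    M - (μ : 𝕜) • 1 = (hM.eigenvectorUnitary : Matrix n n 𝕜) *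
      diagonal (fun i => ((hM.eigenvalues i - μ : ℝ) : 𝕜)) *
        (hM.eigenvectorUnitary : Matrix n n 𝕜)ᴴ := by
  have hUU : (hM.eigenvectorUnitary : Matrix n n 𝕜) *
      (hM.eigenvectorUnitary : Matrix n n 𝕜)ᴴ = 1 :=
    Unitary.mul_star_self_of_mem hM.eigenvectorUnitary.2
  have hdiag : diagonal (fun i => ((hM.eigenvalues i - μ : ℝ) : 𝕜)) =
      diagonal (RCLike.ofReal ∘ hM.eigenvalues) - (μ : 𝕜) • 1 := by
    rw [smul_one_eq_diagonal, diagonal_sub]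
    simp
  conv_lhs => rw [hM.spectral_theorem, Unitary.conjStarAlgAut_apply]
  rw [hdiag, Matrix.mul_sub, Matrix.sub_mul, mul_smul_comm, Matrix.mul_one, smul_mul_assoc, hUU]
  rfl

theorem IsHermitian.isGreatest_negDefDims_sub_smul_one {M : Matrix n n 𝕜} (hM : M.IsHermitian)
    (μ : ℝ) : IsGreatest (M - (μ : 𝕜) • 1).negDefDims #{i | hM.eigenvalues i < μ} := by
  rw [hM.sub_smul_one_eq μ, negDefDims_mul_mul_conjTranspose Unitary.isUnit_coe]
  simpa only [sub_neg] using isGreatest_negDefDims_diagonal (𝕜 := 𝕜) fun i => hM.eigenvalues i - μ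

theorem IsHermitian.isUnit_sub_smul_one {M : Matrix n n 𝕜} (hM : M.IsHermitian) {μ : ℝ}
    (hμ : ∀ i, hM.eigenvalues i ≠ μ) : IsUnit (M - (μ : 𝕜) • 1) := by
  have : μ ∉ spectrum ℝ M := by
    rw [hM.spectrum_real_eq_range_eigenvalues]
    rintro ⟨i, hi⟩
    exact hμ i hi
  rw [spectrum.mem_iff, not_not, Algebra.algebraMap_eq_smul_one,
    RCLike.real_smul_eq_coe_smul (K := 𝕜)] at this
  simpa only [neg_sub] using this.neg

theorem negDefDims_fromBlocks_of_posSemidef {A : Matrix p p 𝕜} (B : Matrix p q 𝕜)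
    (D : Matrix q q 𝕜) (hA : A.IsHermitian) (hAu : IsUnit A)
    (hS : (D - Bᴴ * A⁻¹ * B).PosSemidef) :
    (fromBlocks A B Bᴴ D).negDefDims = A.negDefDims := by
  let L : Matrix (p ⊕ q) (p ⊕ q) 𝕜 := fromBlocks 1 0 (Bᴴ * A⁻¹) 1
  have hL : IsUnit L := (isUnit_iff_isUnit_det L).mpr (by simp [L])
  have hLDL : fromBlocks A B Bᴴ D = L * fromBlocks A 0 0 (D - Bᴴ * A⁻¹ * B) * Lᴴ := by
    let := hAu.invertible
    rw [fromBlocks_eq_of_invertible₁₁ A B Bᴴ D, invOf_eq_nonsing_inv]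
    simp [L, fromBlocks_conjTranspose, conjTranspose_nonsing_inv, hA.eq]
  rw [hLDL, negDefDims_mul_mul_conjTranspose hL, negDefDims_fromBlocks_zero A hS]

end Matrix

theorem Fin.val_lt_card_filter_lt_of_monotone {α : Type*} [LinearOrder α] {m : ℕ}
    {f : Fin m → α} (hf : Monotone f) {a : α} {j : Fin m} (hj : f j < a) :
    (j : ℕ) < #{i | f i < a} := by
  have : Finset.Iic j ⊆ ({i | f i < a} : Finset (Fin m)) := fun i hi =>
    Finset.mem_filter.mpr ⟨Finset.mem_univ i, (hf (Finset.mem_Iic.mp hi)).trans_lt hj⟩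
  simpa [Fin.card_Iic] using Finset.card_le_card this

/-- **Eigenvalue lower bound via positive Schur complement.** Let `H = [[A, B], [Bᴴ, C]]`
be Hermitian and suppose the compression `A` has exactly `N` eigenvalues strictly below
`μ`, and `μ` is not an eigenvalue of `A` (i.e. `λ̃_N < μ < λ̃_{N+1}`).  If the Schur
complement `S_μ = (C − μ) − Bᴴ(A − μ)⁻¹B` is positive definite, then `H` has exactly `N`
eigenvalues (with multiplicity) strictly below `μ`; in particular the `(N+1)`-th sorted
eigenvalue of `H` is at least `μ`. -/
theorem eigenvalue_lower_bound_schur (p k : ℕ)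
    (A : Matrix (Fin p) (Fin p) ℂ) (B : Matrix (Fin p) (Fin k) ℂ)
    (C : Matrix (Fin k) (Fin k) ℂ) (hA : A.IsHermitian)
    (hH : (Matrix.fromBlocks A B Bᴴ C).IsHermitian)
    (N : ℕ) (μ : ℝ)
    (hcount : (Finset.univ.filter fun i => hA.eigenvalues i < μ).card = N)
    (hnoteig : ∀ i, hA.eigenvalues i ≠ μ)
    (hS : ((C - (μ : ℂ) • (1 : Matrix (Fin k) (Fin k) ℂ)) -
        Bᴴ * (A - (μ : ℂ) • (1 : Matrix (Fin p) (Fin p) ℂ))⁻¹ * B).PosDef) :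
    (Finset.univ.filter fun i => hH.eigenvalues i < μ).card = N ∧
      ∀ lam : Fin (p + k) → ℝ, Monotone lam →
        (∃ σ : Equiv.Perm (Fin p ⊕ Fin k),
          lam = hH.eigenvalues ∘ ⇑σ ∘ ⇑(finSumFinEquiv : Fin p ⊕ Fin k ≃ Fin (p + k)).symm) →
        ∀ j : Fin (p + k), N ≤ (j : ℕ) → μ ≤ lam j := by
  have hcountH : #{i | hH.eigenvalues i < μ} = N := by
    have hgreatestH : IsGreatest (fromBlocks A B Bᴴ C - (μ : ℂ) • 1).negDefDims
        #{i | hH.eigenvalues i < μ} := hH.isGreatest_negDefDims_sub_smul_one μ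
    have hgreatestA : IsGreatest (A - (μ : ℂ) • 1).negDefDims N := by
      rw [← hcount]
      exact hA.isGreatest_negDefDims_sub_smul_one μ
    rw [fromBlocks_sub_smul_one, negDefDims_fromBlocks_of_posSemidef B _
      (hA.sub (isHermitian_one.smul (Complex.conj_ofReal μ))) (hA.isUnit_sub_smul_one hnoteig)
      hS.posSemidef] at hgreatestH
    exact hgreatestH.unique hgreatestA
  refine ⟨hcountH, ?_⟩
  rintro lam hmono ⟨σ, rfl⟩ j hj
  by_contra! hlt
  have hsorted := Fin.val_lt_card_filter_lt_of_monotone hmono hlt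
  rw [Finset.card_equiv (t := {i | hH.eigenvalues i < μ}) (finSumFinEquiv.symm.trans σ)
    (by simp), hcountH] at hsorted
  omega
end

section
/- Let H and H' be Hermitian n×n matrices with respective increasingly ordered eigenvalues λ_k and λ'_k. Then for every k, |λ_k − λ'_k| ≤ ‖H − H'‖, the operator norm of the difference. Consequently, a naive gap estimate from a perturbed matrix can overestimate the true gap λ_{N+1} − λ_N by at most 2‖H − H'‖. -/
/-!
Courant–Fischer: for each `k`, the eigenvectors of `H` with index `≥ k` and those of `H'` with
index `≤ k` span subspaces of dimensions `n - k` and `k + 1`, so they share a nonzero vector `x`.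
The Rayleigh quotient of `H` at `x` is at least `λ k`, that of `H'` at most `λ' k`, and the two
differ by at most `ε`; hence `λ k ≤ λ' k + ε`, and symmetrically. The gap bound is then the
triangle inequality.
-/

open Module Submodule RCLike
open scoped InnerProductSpace

lemma Submodule.exists_ne_zero_mem_of_finrank_lt_add {K V : Type*} [DivisionRing K]
    [AddCommGroup V] [Module K V] [FiniteDimensional K V] (U W : Submodule K V)
    (h : finrank K V < finrank K U + finrank K W) : ∃ x ≠ 0, x ∈ U ∧ x ∈ W := by
  have hsum := finrank_sup_add_finrank_inf_eq U W
  have hsup := (U ⊔ W).finrank_le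
  have hinf : U ⊓ W ≠ ⊥ := fun hbot => by
    rw [hbot, finrank_bot] at hsum
    omega
  obtain ⟨x, ⟨hxU, hxW⟩, hx⟩ := exists_mem_ne_zero_of_ne_bot hinf
  exact ⟨x, hx, hxU, hxW⟩

namespace OrthonormalBasis

variable {𝕜 E ι : Type*} [RCLike 𝕜] [NormedAddCommGroup E] [InnerProductSpace 𝕜 E] [Fintype ι]
  (b : OrthonormalBasis ι 𝕜 E)

lemma inner_eq_zero_of_mem_span_image {s : Set ι} {x : E} (hx : x ∈ span 𝕜 (b '' s)) {i : ι}
    (hi : i ∉ s) : ⟪b i, x⟫_𝕜 = 0 := by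
  rw [← b.coe_toBasis, Basis.mem_span_image] at hx
  rw [← b.repr_apply_apply, ← b.coe_toBasis_repr_apply]
  exact Finsupp.notMem_support_iff.mp fun h => hi (hx h)

lemma finrank_span_image (s : Finset ι) : finrank 𝕜 (span 𝕜 (b '' s)) = s.card := by
  have hli : LinearIndependent 𝕜 fun i : (s : Set ι) => b i :=
    b.orthonormal.linearIndependent.comp _ Subtype.val_injective
  rw [Set.image_eq_range, finrank_span_eq_card hli]
  simp

lemma re_inner_apply_self_eq_sum {T : E →ₗ[𝕜] E} {μ : ι → ℝ}
    (hT : ∀ i, T (b i) = (μ i : 𝕜) • b i) (x : E) :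
    re ⟪x, T x⟫_𝕜 = ∑ i, μ i * ‖⟪b i, x⟫_𝕜‖ ^ 2 := by
  have hTx : T x = ∑ i, (⟪b i, x⟫_𝕜 * (μ i : 𝕜)) • b i := by
    conv_lhs => rw [← b.sum_repr' x]
    simp only [map_sum, map_smul, hT, smul_smul]
  rw [hTx, inner_sum, map_sum]
  refine Finset.sum_congr rfl fun i _ => ?_
  rw [inner_smul_right, ← inner_conj_symm x (b i), mul_right_comm, mul_conj, ← ofReal_pow,
    ← ofReal_mul, ofReal_re, mul_comm]

lemma sum_mul_norm_inner_sq_le_of_mem_span_image {f g : ι → ℝ} {s : Set ι}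
    (hfg : ∀ i ∈ s, f i ≤ g i) {x : E} (hx : x ∈ span 𝕜 (b '' s)) :
    ∑ i, f i * ‖⟪b i, x⟫_𝕜‖ ^ 2 ≤ ∑ i, g i * ‖⟪b i, x⟫_𝕜‖ ^ 2 := by
  refine Finset.sum_le_sum fun i _ => ?_
  by_cases hi : i ∈ s
  · exact mul_le_mul_of_nonneg_right (hfg i hi) (by positivity)
  · simp [b.inner_eq_zero_of_mem_span_image hx hi]

lemma sum_const_mul_norm_inner_sq (c : ℝ) (x : E) :
    ∑ i, c * ‖⟪b i, x⟫_𝕜‖ ^ 2 = c * ‖x‖ ^ 2 := by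
  rw [← Finset.mul_sum, b.sum_sq_norm_inner_right]

end OrthonormalBasis

section SortedEigenvalues

variable {𝕜 E : Type*} [RCLike 𝕜] [NormedAddCommGroup E] [InnerProductSpace 𝕜 E] {n : ℕ}

lemma exists_ne_zero_mem_span_Ici_mem_span_Iic (b b' : OrthonormalBasis (Fin n) 𝕜 E)
    (k : Fin n) : ∃ x ≠ 0, x ∈ span 𝕜 (b '' Set.Ici k) ∧ x ∈ span 𝕜 (b' '' Set.Iic k) := by
  have : FiniteDimensional 𝕜 E := b.toBasis.finiteDimensional_of_finite
  refine exists_ne_zero_mem_of_finrank_lt_add _ _ ?_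
  rw [← Finset.coe_Ici, ← Finset.coe_Iic, b.finrank_span_image, b'.finrank_span_image,
    Fin.card_Ici, Fin.card_Iic, finrank_eq_card_basis b.toBasis, Fintype.card_fin]
  omega

variable {T T' : E →ₗ[𝕜] E} {b b' : OrthonormalBasis (Fin n) 𝕜 E} {μ μ' : Fin n → ℝ}

lemma re_inner_apply_self_le_add_of_norm_sub_apply_le {ε : ℝ}
    (hε : ∀ x, ‖T x - T' x‖ ≤ ε * ‖x‖) (x : E) :
    re ⟪x, T x⟫_𝕜 ≤ re ⟪x, T' x⟫_𝕜 + ε * ‖x‖ ^ 2 :=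
  calc re ⟪x, T x⟫_𝕜 = re ⟪x, T' x⟫_𝕜 + re ⟪x, T x - T' x⟫_𝕜 := by
        rw [inner_sub_right, map_sub, add_sub_cancel]
    _ ≤ re ⟪x, T' x⟫_𝕜 + ‖x‖ * (ε * ‖x‖) := by
        gcongr
        exact (re_le_norm _).trans <| (norm_inner_le_norm _ _).trans <|
          mul_le_mul_of_nonneg_left (hε x) (norm_nonneg x)
    _ = re ⟪x, T' x⟫_𝕜 + ε * ‖x‖ ^ 2 := by ring

theorem eigenvalue_le_add_of_norm_sub_apply_le (hμ : Monotone μ) (hμ' : Monotone μ')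
    (hT : ∀ i, T (b i) = (μ i : 𝕜) • b i) (hT' : ∀ i, T' (b' i) = (μ' i : 𝕜) • b' i)
    {ε : ℝ} (hε : ∀ x, ‖T x - T' x‖ ≤ ε * ‖x‖) (k : Fin n) : μ k ≤ μ' k + ε := by
  obtain ⟨x, hx0, hxb, hxb'⟩ := exists_ne_zero_mem_span_Ici_mem_span_Iic b b' k
  have hlow : μ k * ‖x‖ ^ 2 ≤ re ⟪x, T x⟫_𝕜 := by
    rw [← b.sum_const_mul_norm_inner_sq, b.re_inner_apply_self_eq_sum hT]
    exact b.sum_mul_norm_inner_sq_le_of_mem_span_image (fun i hi => hμ hi) hxb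
  have hhigh : re ⟪x, T' x⟫_𝕜 ≤ μ' k * ‖x‖ ^ 2 := by
    rw [← b'.sum_const_mul_norm_inner_sq, b'.re_inner_apply_self_eq_sum hT']
    exact b'.sum_mul_norm_inner_sq_le_of_mem_span_image (fun i hi => hμ' hi) hxb'
  have hpert := re_inner_apply_self_le_add_of_norm_sub_apply_le hε x
  have hx : 0 < ‖x‖ ^ 2 := by positivity
  exact le_of_mul_le_mul_right (by linarith : μ k * ‖x‖ ^ 2 ≤ (μ' k + ε) * ‖x‖ ^ 2) hx

theorem abs_eigenvalue_sub_le_of_norm_sub_apply_le (hμ : Monotone μ) (hμ' : Monotone μ')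
    (hT : ∀ i, T (b i) = (μ i : 𝕜) • b i) (hT' : ∀ i, T' (b' i) = (μ' i : 𝕜) • b' i)
    {ε : ℝ} (hε : ∀ x, ‖T x - T' x‖ ≤ ε * ‖x‖) (k : Fin n) : |μ k - μ' k| ≤ ε := by
  have hε' : ∀ x, ‖T' x - T x‖ ≤ ε * ‖x‖ := fun x => norm_sub_rev (T x) (T' x) ▸ hε x
  have h := eigenvalue_le_add_of_norm_sub_apply_le hμ hμ' hT hT' hε k
  have h' := eigenvalue_le_add_of_norm_sub_apply_le hμ' hμ hT' hT hε' k
  exact abs_sub_le_iff.2 ⟨by linarith, by linarith⟩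

end SortedEigenvalues

lemma abs_sub_sub_sub_le {α : Type*} [AddCommGroup α] [LinearOrder α] [IsOrderedAddMonoid α]
    (a b c d : α) : |a - b - (c - d)| ≤ |a - c| + |b - d| := by
  rw [sub_sub_sub_comm]
  exact abs_sub _ _

lemma Matrix.IsHermitian.toEuclideanLin_eigenvectorBasis {𝕜 ι : Type*} [RCLike 𝕜] [Fintype ι]
    [DecidableEq ι] {H : Matrix ι ι 𝕜} (hH : H.IsHermitian) (i : ι) :
    Matrix.toEuclideanLin H (hH.eigenvectorBasis i) =
      (hH.eigenvalues i : 𝕜) • hH.eigenvectorBasis i := by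
  change WithLp.toLp 2 (H.mulVec (hH.eigenvectorBasis i)) = _
  rw [hH.mulVec_eigenvectorBasis, WithLp.toLp_smul, WithLp.toLp_ofLp,
    real_smul_eq_coe_smul (K := 𝕜)]

lemma matVec_eq_toEuclideanLin {n : ℕ} (H : Matrix (Fin n) (Fin n) ℂ)
    (u : EuclideanSpace ℂ (Fin n)) : matVec H u = Matrix.toEuclideanLin H u :=
  rfl

/-- **Weyl's eigenvalue perturbation inequality.** Let `H` and `H'` be Hermitian matrices
with increasingly sorted eigenvalues `lam` and `lam'`, and let `ε` bound the operator norm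
of `H − H'` (i.e. `‖(H − H') x‖ ≤ ε ‖x‖` for all `x`).  Then `|lam k − lam' k| ≤ ε` for
every `k`; consequently the naive gap estimate `lam'_{N+1} − lam'_N` differs from the true
gap `lam_{N+1} − lam_N` by at most `2ε`. -/
theorem weyl_perturbation (n : ℕ)
    (H H' : Matrix (Fin n) (Fin n) ℂ) (hH : H.IsHermitian) (hH' : H'.IsHermitian)
    (lam lam' : Fin n → ℝ)
    (hlam_mono : Monotone lam) (hlam : ∃ σ : Equiv.Perm (Fin n), lam = hH.eigenvalues ∘ σ)
    (hlam'_mono : Monotone lam')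
    (hlam' : ∃ σ : Equiv.Perm (Fin n), lam' = hH'.eigenvalues ∘ σ)
    (ε : ℝ) (hε : ∀ x : EuclideanSpace ℂ (Fin n), ‖matVec (H - H') x‖ ≤ ε * ‖x‖) :
    (∀ i, |lam i - lam' i| ≤ ε) ∧
      ∀ N : ℕ, ∀ h : N + 1 < n,
        |(lam ⟨N + 1, h⟩ - lam ⟨N, by omega⟩) - (lam' ⟨N + 1, h⟩ - lam' ⟨N, by omega⟩)| ≤
          2 * ε := by
  obtain ⟨σ, rfl⟩ := hlam
  obtain ⟨σ', rfl⟩ := hlam'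
  have hweyl : ∀ i, |(hH.eigenvalues ∘ σ) i - (hH'.eigenvalues ∘ σ') i| ≤ ε :=
    abs_eigenvalue_sub_le_of_norm_sub_apply_le (b := hH.eigenvectorBasis.reindex σ.symm)
      (b' := hH'.eigenvectorBasis.reindex σ'.symm) hlam_mono hlam'_mono
      (fun i => by simpa using hH.toEuclideanLin_eigenvectorBasis (σ i))
      (fun i => by simpa using hH'.toEuclideanLin_eigenvectorBasis (σ' i))
      (fun x => by
        simpa only [matVec_eq_toEuclideanLin, map_sub, LinearMap.sub_apply] using hε x)
  refine ⟨hweyl, fun N h => ?_⟩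
  calc _ ≤ _ := abs_sub_sub_sub_le _ _ _ _
    _ ≤ 2 * ε := by linarith [hweyl ⟨N + 1, h⟩, hweyl ⟨N, by omega⟩]
end

section
/- Let H be a self-adjoint operator, u a unit vector with λ̃ = ⟨u, H u⟩ and residual r = H u − λ̃ u. If λ is a simple eigenvalue of H with normalized eigenvector w, separated from the rest of the spectrum by δ > 0, and ‖r‖ < δ/2, then the eigenvector error satisfies sin θ ≤ ‖r‖/(δ − ‖r‖), where θ is the angle between u and w (Davis–Kahan / Saad-type sin-θ bound). -/
set_option maxHeartbeats 1000000


/-- **Davis–Kahan / Saad-type sin-θ bound.** Let `H` be Hermitian, `u` a unit vector with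
Rayleigh quotient `λ̃ = ⟨u, H u⟩` and residual `r = H u − λ̃ u`.  If `lam` is a simple
eigenvalue of `H` with normalized eigenvector `w`, and every other eigenvalue of `H` is
at distance at least `δ > 0` from `λ̃`, and `‖r‖ < δ/2`, then the eigenvector error
satisfies `sin θ = ‖u − ⟨w, u⟩ w‖ ≤ ‖r‖/(δ − ‖r‖)`. -/
theorem davis_kahan_sin_theta (n : ℕ)
    (H : Matrix (Fin n) (Fin n) ℂ) (hH : H.IsHermitian)
    (u : EuclideanSpace ℂ (Fin n)) (hu : ‖u‖ = 1)
    (lamt : ℝ) (hlamt : (lamt : ℂ) = (inner ℂ u (matVec H u) : ℂ))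
    (r : EuclideanSpace ℂ (Fin n)) (hr : r = matVec H u - (lamt : ℂ) • u)
    (lam : ℝ) (w : EuclideanSpace ℂ (Fin n)) (hw : ‖w‖ = 1)
    (heig : matVec H w = (lam : ℂ) • w)
    (hsimple : ∀ v : EuclideanSpace ℂ (Fin n), matVec H v = (lam : ℂ) • v → ∃ c : ℂ, v = c • w)
    (δ : ℝ) (hδ : 0 < δ)
    (hsep : ∀ μ : ℝ, (μ : ℂ) ∈ spectrum ℂ H → μ ≠ lam → δ ≤ |μ - lamt|)
    (hres : ‖r‖ < δ / 2) :
    ‖u - (inner ℂ w u : ℂ) • w‖ ≤ ‖r‖ / (δ - ‖r‖) := by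
  classical
  have hme : ∀ x, matVec H x = Matrix.toEuclideanLin H x := fun _ => rfl
  have hsym : ∀ x y : EuclideanSpace ℂ (Fin n),
      (inner ℂ (matVec H x) y : ℂ) = inner ℂ x (matVec H y) := fun x y =>
    (Matrix.isHermitian_iff_isSymmetric.1 hH) x y
  set v : EuclideanSpace ℂ (Fin n) := u - (inner ℂ w u : ℂ) • w with hv
  have hww : (inner ℂ w w : ℂ) = 1 := by
    rw [inner_self_eq_norm_sq_to_K, hw]; norm_num
  have hwv : (inner ℂ w v : ℂ) = 0 := by
    simp [hv, inner_sub_right, inner_smul_right, hww, hw]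
  set s : EuclideanSpace ℂ (Fin n) := matVec H v - (lamt : ℂ) • v with hs
  have h1 : (inner ℂ w (matVec H v) : ℂ) = 0 := by
    rw [← hsym w v, heig, inner_smul_left, hwv, mul_zero]
  have hws : (inner ℂ w s : ℂ) = 0 := by
    rw [hs, inner_sub_right, inner_smul_right, h1, hwv, mul_zero, sub_zero]
  set c : ℂ := (inner ℂ w u : ℂ) with hc
  have hu_decomp : u = c • w + v := by rw [hv]; abel
  have hHu : matVec H u = c • ((lam : ℂ) • w) + matVec H v := by
    conv_lhs => rw [hu_decomp]
    rw [hme, map_add, map_smul, ← hme, ← hme, heig]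
  have hdecomp : r = (c * ((lam : ℂ) - lamt)) • w + s := by
    rw [hr, hHu, hs, hu_decomp]
    module
  -- Pythagoras: ‖s‖ ≤ ‖r‖
  have hsr : ‖s‖ ≤ ‖r‖ := by
    have h0 : (inner ℂ ((c * ((lam : ℂ) - lamt)) • w) s : ℂ) = 0 := by
      rw [inner_smul_left, hws, mul_zero]
    have hpyth := norm_add_sq_eq_norm_sq_add_norm_sq_of_inner_eq_zero _ _ h0
    rw [← hdecomp] at hpyth
    nlinarith [norm_nonneg r, norm_nonneg s,
      sq_nonneg (‖(c * ((lam : ℂ) - lamt)) • w‖)]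
  set B := hH.eigenvectorBasis with hB
  have heigB : ∀ i, matVec H (B i) = ((hH.eigenvalues i : ℝ) : ℂ) • B i := by
    intro i
    have h := hH.mulVec_eigenvectorBasis i
    ext j
    have := congrFun h j
    simpa [matVec, Complex.real_smul] using this
  have hrepr_s : ∀ i, B.repr s i = (((hH.eigenvalues i : ℝ) : ℂ) - lamt) * B.repr v i := by
    intro i
    rw [B.repr_apply_apply, B.repr_apply_apply, hs, inner_sub_right, inner_smul_right,
      ← hsym (B i) v, heigB i, inner_smul_left, Complex.conj_ofReal]
    ring
  have hzero : ∀ i, hH.eigenvalues i = lam → B.repr v i = 0 := by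
    intro i hi
    obtain ⟨c, hc⟩ := hsimple (B i) (by rw [heigB i, hi])
    rw [B.repr_apply_apply, hc, inner_smul_left, hwv, mul_zero]
  have hterm : ∀ i, δ ^ 2 * ‖B.repr v i‖ ^ 2 ≤ ‖B.repr s i‖ ^ 2 := by
    intro i
    by_cases hi : hH.eigenvalues i = lam
    · rw [hzero i hi]; simp
    · have hmem : ((hH.eigenvalues i : ℝ) : ℂ) ∈ spectrum ℂ H := by
        have := hH.eigenvalues_mem_spectrum_real i
        exact spectrum.algebraMap_mem ℂ this
      have hge : δ ≤ |hH.eigenvalues i - lamt| := hsep _ hmem hi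
      rw [hrepr_s i]
      have : ‖(((hH.eigenvalues i : ℝ) : ℂ) - lamt)‖ = |hH.eigenvalues i - lamt| := by
        rw [← Complex.ofReal_sub, Complex.norm_real, Real.norm_eq_abs]
      rw [norm_mul, this, mul_pow]
      have h2 : δ ^ 2 ≤ |hH.eigenvalues i - lamt| ^ 2 := by
        nlinarith [abs_nonneg (hH.eigenvalues i - lamt)]
      nlinarith [sq_nonneg (‖B.repr v i‖)]
  have hnv : ‖v‖ ^ 2 = ∑ i, ‖B.repr v i‖ ^ 2 := by
    rw [← B.repr.norm_map v]
    exact_mod_cast PiLp.norm_sq_eq_of_L2 _ (B.repr v)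
  have hns : ‖s‖ ^ 2 = ∑ i, ‖B.repr s i‖ ^ 2 := by
    rw [← B.repr.norm_map s]
    exact_mod_cast PiLp.norm_sq_eq_of_L2 _ (B.repr s)
  have hsq : δ ^ 2 * ‖v‖ ^ 2 ≤ ‖s‖ ^ 2 := by
    rw [hnv, hns, Finset.mul_sum]
    exact Finset.sum_le_sum fun i _ => hterm i
  have hdv : δ * ‖v‖ ≤ ‖s‖ := by
    nlinarith [norm_nonneg v, norm_nonneg s, hδ.le, mul_nonneg hδ.le (norm_nonneg v)]
  have hdr : δ * ‖v‖ ≤ ‖r‖ := le_trans hdv hsr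
  have hpos : 0 < δ - ‖r‖ := by linarith
  rw [le_div_iff₀ hpos]
  nlinarith [norm_nonneg v, norm_nonneg r]
end
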